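/- If f : ℝ → ℝ is convex on an interval [a, b] and ν is a random variable taking values in [a, b] with mean m, then E[f(ν)] ≤ ((b - m)/(b - a))·f(a) + ((m - a)/(b - a))·f(b), with equality attained by the two-point distribution β·δ_a + (1-β)·δ_b with β = (b - m)/(b - a). -/

import Mathlib

/-! On `[a, b]` a convex function lies below its chord, which is affine; integrating an affine
function against a probability measure evaluates it at the mean. The two-point measure with mean
`m` integrates every function to the chord's value at `m`. -/

open MeasureTheory

theorem ConvexOn.le_chord {s : Set ℝ} {f : ℝ → ℝ} (hf : ConvexOn ℝ s f) {a b x : ℝ}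
    (ha : a ∈ s) (hb : b ∈ s) (hab : a < b) (hx : x ∈ Set.Icc a b) :
    f x ≤ (b - x) / (b - a) * f a + (x - a) / (b - a) * f b := by
  have hba : b - a ≠ 0 := (sub_pos.2 hab).ne'
  have hcomb : (b - x) / (b - a) * a + (x - a) / (b - a) * b = x := by
    field_simp; ring
  simpa only [hcomb, smul_eq_mul] using
    hf.2 ha hb (div_nonneg (sub_nonneg.2 hx.2) (sub_pos.2 hab).le)
      (div_nonneg (sub_nonneg.2 hx.1) (sub_pos.2 hab).le) (by field_simp; ring)

section Chord

variable {μ : Measure ℝ} (a b u v : ℝ)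

theorem integrable_chord [IsFiniteMeasure μ] (hμ : Integrable (fun x => x) μ) :
    Integrable (fun x => (b - x) / (b - a) * u + (x - a) / (b - a) * v) μ := by
  have hleft : Integrable (fun x => (b - x) / (b - a) * u) μ :=
    (((integrable_const b).sub hμ).div_const _).mul_const _
  have hright : Integrable (fun x => (x - a) / (b - a) * v) μ :=
    ((hμ.sub (integrable_const a)).div_const _).mul_const _
  exact hleft.add hright

theorem integral_chord [IsProbabilityMeasure μ] (hμ : Integrable (fun x => x) μ) :
    ∫ x, ((b - x) / (b - a) * u + (x - a) / (b - a) * v) ∂μ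
      = (b - ∫ x, x ∂μ) / (b - a) * u + ((∫ x, x ∂μ) - a) / (b - a) * v := by
  have haffine : (fun x => (b - x) / (b - a) * u + (x - a) / (b - a) * v)
      = fun x => x * ((v - u) / (b - a)) + (b * u - a * v) / (b - a) := by
    funext x; ring
  rw [haffine, integral_add (hμ.mul_const _) (integrable_const _), integral_mul_const,
    integral_const, probReal_univ, one_smul]
  ring

end Chord

theorem integral_ofReal_smul_dirac_add_ofReal_smul_dirac {α E : Type*} [MeasurableSpace α]
    [MeasurableSingletonClass α] [NormedAddCommGroup E] [NormedSpace ℝ E] [CompleteSpace E]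
    {p q : ℝ} (hp : 0 ≤ p) (hq : 0 ≤ q) (g : α → E) (x y : α) :
    ∫ z, g z ∂(ENNReal.ofReal p • Measure.dirac x + ENNReal.ofReal q • Measure.dirac y)
      = p • g x + q • g y := by
  rw [integral_add_measure ((integrable_dirac (by simp)).smul_measure (by simp))
      ((integrable_dirac (by simp)).smul_measure (by simp)),
    integral_smul_measure, integral_smul_measure, integral_dirac, integral_dirac,
    ENNReal.toReal_ofReal hp, ENNReal.toReal_ofReal hq]

/-- Edmundson–Madansky inequality: for `f` convex on `[a,b]` and a random variable with
values in `[a,b]` and mean `m`, `E[f(ν)] ≤ ((b-m)/(b-a)) f(a) + ((m-a)/(b-a)) f(b)`,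
with equality attained by the two-point distribution `β δ_a + (1-β) δ_b`,
`β = (b-m)/(b-a)`. -/
theorem edmundson_madansky
    (f : ℝ → ℝ) (a b m : ℝ) (hab : a < b) (ham : a ≤ m) (hmb : m ≤ b)
    (hconv : ConvexOn ℝ (Set.Icc a b) f)
    (μ : Measure ℝ) [IsProbabilityMeasure μ]
    (hsupp : ∀ᵐ ν ∂μ, ν ∈ Set.Icc a b)
    (hf : Integrable f μ) (hν : Integrable (fun ν => ν) μ)
    (hmean : (∫ ν, ν ∂μ) = m) :
    (∫ ν, f ν ∂μ) ≤ (b - m) / (b - a) * f a + (m - a) / (b - a) * f b ∧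
      (let β : ℝ := (b - m) / (b - a)
       let μ₂ : Measure ℝ :=
         ENNReal.ofReal β • Measure.dirac a + ENNReal.ofReal (1 - β) • Measure.dirac b
       (∫ ν, ν ∂μ₂) = m ∧
         (∫ ν, f ν ∂μ₂) = (b - m) / (b - a) * f a + (m - a) / (b - a) * f b) := by
  have hba : b - a ≠ 0 := (sub_pos.2 hab).ne'
  have hβ : 0 ≤ (b - m) / (b - a) := div_nonneg (sub_nonneg.2 hmb) (sub_pos.2 hab).le
  have h1β : 1 - (b - m) / (b - a) = (m - a) / (b - a) := by field_simp; ring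
  refine ⟨?_, ?_⟩
  · calc ∫ ν, f ν ∂μ ≤ ∫ x, ((b - x) / (b - a) * f a + (x - a) / (b - a) * f b) ∂μ :=
          integral_mono_ae hf (integrable_chord a b _ _ hν) <| by
            filter_upwards [hsupp] with x hx
            exact hconv.le_chord (Set.left_mem_Icc.2 hab.le) (Set.right_mem_Icc.2 hab.le) hab hx
      _ = (b - m) / (b - a) * f a + (m - a) / (b - a) * f b := by
          rw [integral_chord a b _ _ hν, hmean]
  · have h1β_nonneg : 0 ≤ 1 - (b - m) / (b - a) :=
      h1β ▸ div_nonneg (sub_nonneg.2 ham) (sub_pos.2 hab).le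
    dsimp only
    rw [integral_ofReal_smul_dirac_add_ofReal_smul_dirac hβ h1β_nonneg,
      integral_ofReal_smul_dirac_add_ofReal_smul_dirac hβ h1β_nonneg, h1β]
    simp only [smul_eq_mul, and_true]
    field_simp
    ring
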